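/- A language L ⊆ Σ* over a finite alphabet Σ is semilinear if and only if there exists a regular language R ⊆ Σ* that is letter-equivalent to L, i.e., ψ(L) = ψ(R). -/

import Mathlib

/-- A set `Q ⊆ ℕ^α` is linear if it has a constant vector `v₀` and finitely many
period vectors `v₁, …, v_l` with `Q = {v₀ + i₁v₁ + ⋯ + i_l v_l}`. -/
def IsLinearSet' {α : Type*} (Q : Set (α → ℕ)) : Prop :=
  ∃ (v₀ : α → ℕ) (l : ℕ) (v : Fin l → α → ℕ),
    Q = { x | ∃ c : Fin l → ℕ, x = v₀ + ∑ j, c j • v j }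

/-- A set is semilinear if it is a finite union of linear sets. -/
def IsSemilinearSet' {α : Type*} (Q : Set (α → ℕ)) : Prop :=
  ∃ (n : ℕ) (Qs : Fin n → Set (α → ℕ)),
    (∀ i, IsLinearSet' (Qs i)) ∧ Q = ⋃ i, Qs i

open Classical in
/-- The Parikh image of a word: `parikhWord w a = |w|_a`. -/
noncomputable def parikhWord {σ : Type*} (w : List σ) : σ → ℕ :=
  fun a => w.count a

/-- A language is semilinear if its Parikh image is a semilinear set. -/
def IsSemilinearLanguage {σ : Type*} (L : Set (List σ)) : Prop :=
  IsSemilinearSet' (parikhWord '' L)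

/-!
The Parikh map turns concatenation of languages into `+`, union into `∪` and Kleene star into
additive closure.

If `L` is accepted by a DFA, the languages `R^A_{pq}` of runs from `p` to `q` with all
intermediate states in `A` obey the McNaughton–Yamada recursion
`R^{A ∪ {r}}_{pq} = R^A_{pq} + R^A_{pr} (R^A_{rr})∗ R^A_{rq}`, and `R^∅_{pq}` is finite; so all
their Parikh images, and hence that of `L`, are semilinear.

Conversely, the linear set `ψ(w₀) + ℕψ(w₁) + ⋯ + ℕψ(wₗ)` is the Parikh image of the language
`{w₀}{w₁, …, wₗ}∗`, which is regular: by Myhill–Nerode, since every left quotient of `L * M` or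
`L∗` is determined by finitely many left quotients of `L` and `M`.
-/

open Set Pointwise Computability

section Semilinear
variable {α : Type*} {Q : Set (α → ℕ)}

lemma isLinearSet'_iff : IsLinearSet' Q ↔ IsLinearSet Q := by
  have key : ∀ (v₀ : α → ℕ) {l : ℕ} (v : Fin l → α → ℕ),
      {x | ∃ c : Fin l → ℕ, x = v₀ + ∑ j, c j • v j} =
        v₀ +ᵥ (AddSubmonoid.closure (range v) : Set _) := by
    intro v₀ l v
    ext x
    simp [mem_vadd_set, AddSubmonoid.mem_closure_range_iff_of_fintype, eq_comm]
  constructor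
  · rintro ⟨v₀, l, v, rfl⟩
    exact ⟨v₀, range v, finite_range v, key v₀ v⟩
  · rintro ⟨v₀, t, ht, rfl⟩
    obtain ⟨l, v, hv⟩ := ht.fin_embedding
    exact ⟨v₀, l, v, by rw [key, hv]⟩

lemma isSemilinearSet'_iff : IsSemilinearSet' Q ↔ IsSemilinearSet Q := by
  simp_rw [IsSemilinearSet', isLinearSet'_iff]
  constructor
  · rintro ⟨n, Qs, hlin, rfl⟩
    exact ⟨range Qs, finite_range Qs, forall_mem_range.2 hlin, (sUnion_range Qs).symm⟩
  · rintro ⟨S, hS, hlin, rfl⟩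
    obtain ⟨n, Qs, rfl⟩ := hS.fin_embedding
    exact ⟨n, Qs, forall_mem_range.1 hlin, sUnion_range Qs⟩

end Semilinear

namespace Language
variable {α : Type*} {L M : Language α}

lemma append_mem_kstar {u v : List α} (hu : u ∈ L∗) (hv : v ∈ L∗) : u ++ v ∈ L∗ :=
  kstar_mul_kstar L ▸ append_mem_mul hu hv

lemma mem_leftQuotient_mul {x w : List α} :
    w ∈ (L * M).leftQuotient x ↔
      w ∈ L.leftQuotient x * M ∨ ∃ y ∈ L, ∃ z, y ++ z = x ∧ w ∈ M.leftQuotient z := by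
  simp only [mem_leftQuotient, mem_mul]
  constructor
  · rintro ⟨y, hy, v, hv, h⟩
    rcases List.append_eq_append_iff.1 h with ⟨z, rfl, rfl⟩ | ⟨a, rfl, rfl⟩
    · exact Or.inr ⟨y, hy, z, rfl, hv⟩
    · exact Or.inl ⟨a, hy, v, hv, rfl⟩
  · rintro (⟨a, ha, v, hv, rfl⟩ | ⟨y, hy, z, rfl, hz⟩)
    · exact ⟨x ++ a, ha, v, hv, by simp⟩
    · exact ⟨y, hy, z ++ w, hz, by simp⟩

lemma mem_leftQuotient_kstar {x w : List α} :
    w ∈ L∗.leftQuotient x ↔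
      (∃ y ∈ L∗, ∃ z, y ++ z = x ∧ w ∈ L.leftQuotient z * L∗) ∨ (x ∈ L∗ ∧ w = []) := by
  rw [mem_leftQuotient]
  constructor
  · intro h
    obtain ⟨S, hS, hSL⟩ := mem_kstar.1 h
    clear h
    induction S generalizing x with
    | nil =>
      obtain ⟨rfl, rfl⟩ := List.append_eq_nil_iff.1 hS
      exact Or.inr ⟨nil_mem_kstar L, rfl⟩
    | cons s S ih =>
      have hs : s ∈ L := hSL s List.mem_cons_self
      have hSL' : ∀ u ∈ S, u ∈ L := fun u hu => hSL u (List.mem_cons_of_mem s hu)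
      rw [List.flatten_cons] at hS
      rcases List.append_eq_append_iff.1 hS with ⟨a, rfl, rfl⟩ | ⟨c, rfl, hc⟩
      · exact Or.inl ⟨[], nil_mem_kstar L, x, rfl, append_mem_mul hs (join_mem_kstar hSL')⟩
      · have hs' : s ∈ L∗ := (le_kstar : L ≤ L∗) hs
        rcases ih hc.symm hSL' with ⟨y, hy, z, rfl, hz⟩ | ⟨hcL, rfl⟩
        · exact Or.inl ⟨s ++ y, append_mem_kstar hs' hy, z, by simp, hz⟩
        · exact Or.inr ⟨append_mem_kstar hs' hcL, rfl⟩
  · rintro (⟨y, hy, z, rfl, hz⟩ | ⟨hx, rfl⟩)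
    · obtain ⟨a, ha, b, hb, rfl⟩ := mem_mul.1 hz
      rw [List.append_assoc, ← List.append_assoc z]
      exact append_mem_kstar hy ((mul_kstar_le_kstar : L * L∗ ≤ L∗) (append_mem_mul ha hb))
    · simpa using hx

theorem IsRegular.mul (hL : L.IsRegular) (hM : M.IsRegular) : (L * M).IsRegular := by
  refine .of_finite_range_leftQuotient <|
    ((hL.finite_range_leftQuotient.prod hM.finite_range_leftQuotient.finite_subsets).image
      fun p => p.1 * M + ⨆ K : p.2, K.1).subset ?_
  rintro _ ⟨x, rfl⟩
  refine ⟨(L.leftQuotient x, {K | ∃ y ∈ L, ∃ z, y ++ z = x ∧ K = M.leftQuotient z}),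
    ⟨mem_range_self x, ?_⟩, ?_⟩
  · rintro _ ⟨y, -, z, -, rfl⟩
    exact mem_range_self z
  · ext w
    rw [mem_leftQuotient_mul, mem_add, mem_iSup]
    simp [and_assoc]

theorem IsRegular.kstar (hL : L.IsRegular) : L∗.IsRegular := by
  refine .of_finite_range_leftQuotient <|
    ((hL.finite_range_leftQuotient.finite_subsets.prod (finite_univ (α := Prop))).image
      fun p => (⨆ K : p.1, K.1) * L∗ + ⨆ _ : p.2, 1).subset ?_
  rintro _ ⟨x, rfl⟩
  refine ⟨({K | ∃ y ∈ L∗, ∃ z, y ++ z = x ∧ K = L.leftQuotient z}, x ∈ L∗),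
    ⟨?_, trivial⟩, ?_⟩
  · rintro _ ⟨y, -, z, -, rfl⟩
    exact mem_range_self z
  · ext w
    rw [mem_leftQuotient_kstar, mem_add, iSup_mul, mem_iSup, mem_iSup]
    simp [and_assoc]

theorem isRegular_of_finite (hL : L.Finite) : L.IsRegular := by
  refine .of_finite_range_leftQuotient <|
    (hL.biUnion fun w _ => w.tails.finite_toSet).finite_subsets.subset ?_
  rintro _ ⟨x, rfl⟩ s hs
  exact mem_biUnion hs ((List.mem_tails _ _).2 (List.suffix_append x s))

end Language

section Parikh
variable {σ : Type*}

lemma parikhWord_nil : parikhWord ([] : List σ) = 0 := by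
  funext a; simp [parikhWord]

lemma parikhWord_append (u v : List σ) :
    parikhWord (u ++ v) = parikhWord u + parikhWord v := by
  funext a; simp [parikhWord, List.count_append]

lemma parikhWord_surjective [Finite σ] : Function.Surjective (parikhWord : List σ → σ → ℕ) := by
  classical
  intro v
  refine ⟨(Finsupp.toMultiset (Finsupp.equivFunOnFinite.symm v)).toList, funext fun a => ?_⟩
  simp only [parikhWord]
  rw [← Multiset.coe_count, Multiset.coe_toList, Finsupp.count_toMultiset]
  rfl

lemma image_parikhWord_add (L M : Language σ) :
    parikhWord '' (L + M) = parikhWord '' L ∪ parikhWord '' M :=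
  image_union _ _ _

lemma image_parikhWord_mul (L M : Language σ) :
    parikhWord '' (L * M) = parikhWord '' L + parikhWord '' M :=
  (image_image2_distrib parikhWord_append).trans image2_add

lemma image_parikhWord_kstar (L : Language σ) :
    parikhWord '' (L∗ : Language σ) = AddSubmonoid.closure (parikhWord '' L) := by
  apply Subset.antisymm
  · rintro _ ⟨_, ⟨S, rfl, hS⟩, rfl⟩
    induction S with
    | nil => simp [parikhWord_nil, zero_mem]
    | cons w S ih =>
      rw [List.flatten_cons, parikhWord_append]
      exact add_mem (AddSubmonoid.subset_closure ⟨w, hS w (by simp), rfl⟩)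
        (ih fun u hu => hS u (by simp [hu]))
  · intro v hv
    induction hv using AddSubmonoid.closure_induction with
    | mem v hv =>
      obtain ⟨w, hw, rfl⟩ := hv
      exact ⟨w, (le_kstar : L ≤ L∗) hw, rfl⟩
    | zero => exact ⟨[], Language.nil_mem_kstar L, parikhWord_nil⟩
    | add _ _ _ _ hu hv =>
      obtain ⟨u, hu, rfl⟩ := hu
      obtain ⟨v, hv, rfl⟩ := hv
      exact ⟨u ++ v, Language.append_mem_kstar hu hv, parikhWord_append u v⟩

end Parikh

section Forward
variable {σ : Type*} [Finite σ]

lemma exists_isRegular_image_parikhWord_eq_of_isLinearSet {s : Set (σ → ℕ)}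
    (hs : IsLinearSet s) : ∃ R : Language σ, R.IsRegular ∧ parikhWord '' R = s := by
  obtain ⟨a, t, ht, rfl⟩ := hs
  let g := Function.surjInv (parikhWord_surjective (σ := σ))
  have hg : ∀ v, parikhWord (g v) = v := Function.surjInv_eq _
  let T : Language σ := g '' t
  refine ⟨{g a} * T∗, (Language.isRegular_of_finite (finite_singleton _)).mul
    (Language.isRegular_of_finite (ht.image g)).kstar, ?_⟩
  have hT : parikhWord '' T = t := by simp [T, image_image, hg]
  rw [image_parikhWord_mul, image_parikhWord_kstar, hT]
  change parikhWord '' ({g a} : Set (List σ)) + _ = _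
  rw [image_singleton, hg, singleton_add]
  rfl

lemma exists_isRegular_image_parikhWord_eq {s : Set (σ → ℕ)} (hs : IsSemilinearSet s) :
    ∃ R : Language σ, R.IsRegular ∧ parikhWord '' R = s := by
  obtain ⟨S, hS, hlin, rfl⟩ := hs
  induction S, hS using Set.Finite.induction_on with
  | empty =>
    exact ⟨0, Language.isRegular_of_finite finite_empty, by rw [sUnion_empty]; exact image_empty _⟩
  | @insert t S _ _ ih =>
    obtain ⟨R₁, hR₁, h₁⟩ :=
      exists_isRegular_image_parikhWord_eq_of_isLinearSet (hlin t (mem_insert t S))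
    obtain ⟨R₂, hR₂, h₂⟩ := ih fun u hu => hlin u (mem_insert_of_mem t hu)
    exact ⟨R₁ + R₂, hR₁.add hR₂, by rw [image_parikhWord_add, h₁, h₂, sUnion_insert]⟩

end Forward

namespace DFA
variable {α S : Type*} (M : DFA α S)

/-- Reading `w` from `p` ends in `q`, and every state visited strictly in between lies in `A`. -/
def ReachesVia (A : Set S) : S → S → List α → Prop
  | p, q, [] => p = q
  | p, q, a :: w => (w = [] ∨ M.step p a ∈ A) ∧ ReachesVia A (M.step p a) q w

def viaLang (A : Set S) (p q : S) : Language α := {w | M.ReachesVia A p q w}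

variable {M} {A B : Set S} {p q r : S}

lemma ReachesVia.mono (hAB : A ⊆ B) {w : List α} (h : M.ReachesVia A p q w) :
    M.ReachesVia B p q w := by
  induction w generalizing p with
  | nil => exact h
  | cons a w ih => exact ⟨h.1.imp_right (@hAB _), ih h.2⟩

lemma reachesVia_univ {w : List α} : M.ReachesVia univ p q w ↔ M.evalFrom p w = q := by
  induction w generalizing p with
  | nil => rfl
  | cons a w ih => simp [ReachesVia, ih, evalFrom_cons]

lemma ReachesVia.append (hr : r ∈ A) {u v : List α} (hu : M.ReachesVia A p r u)
    (hv : M.ReachesVia A r q v) : M.ReachesVia A p q (u ++ v) := by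
  induction u generalizing p with
  | nil => exact (show p = r from hu) ▸ hv
  | cons a u ih =>
    refine ⟨?_, ih hu.2⟩
    rcases hu with ⟨rfl | hA, hu⟩
    · exact Or.inr ((show M.step p a = r from hu) ▸ hr)
    · exact Or.inr hA

lemma ReachesVia.length_le_one {w : List α} (h : M.ReachesVia ∅ p q w) : w.length ≤ 1 := by
  rcases w with _ | ⟨a, _ | ⟨b, w⟩⟩ <;> simp_all [ReachesVia]

lemma viaLang_mul_le (hr : r ∈ A) : M.viaLang A p r * M.viaLang A r q ≤ M.viaLang A p q := by
  rintro _ ⟨u, hu, v, hv, rfl⟩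
  exact hu.append hr hv

lemma ReachesVia.mem_of_insert {w : List α} (h : M.ReachesVia (insert r A) p q w) :
    w ∈ M.viaLang A p q + M.viaLang A p r * ((M.viaLang A r r)∗ * M.viaLang A r q) := by
  induction w generalizing p with
  | nil => exact Or.inl h
  | cons a w ih =>
    obtain ⟨hs, hw⟩ := h
    rcases eq_or_ne w [] with rfl | hne
    · exact Or.inl ⟨Or.inl rfl, hw⟩
    rcases hs.resolve_left hne with hsr | hsA
    · have hunfold : (M.viaLang A r r)∗ * M.viaLang A r q =
          M.viaLang A r q + M.viaLang A r r * ((M.viaLang A r r)∗ * M.viaLang A r q) := by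
        conv_lhs => rw [← Language.one_add_self_mul_kstar_eq_kstar, add_mul, one_mul, mul_assoc]
      have hw' : w ∈ (M.viaLang A r r)∗ * M.viaLang A r q := hunfold ▸ hsr ▸ ih hw
      have ha : [a] ∈ M.viaLang A p r := ⟨Or.inl rfl, hsr⟩
      exact Or.inr (Language.append_mem_mul ha hw')
    · rcases ih hw with hq | ⟨u, hu, v, hv, rfl⟩
      · exact Or.inl ⟨Or.inr hsA, hq⟩
      · exact Or.inr ⟨a :: u, ⟨Or.inr hsA, hu⟩, v, hv, rfl⟩

lemma viaLang_insert :
    M.viaLang (insert r A) p q =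
      M.viaLang A p q + M.viaLang A p r * ((M.viaLang A r r)∗ * M.viaLang A r q) := by
  have hmono : ∀ x y, M.viaLang A x y ≤ M.viaLang (insert r A) x y :=
    fun x y _ hw => ReachesVia.mono (subset_insert r A) hw
  have hr := mem_insert r A
  refine le_antisymm (fun w hw => ReachesVia.mem_of_insert hw) (sup_le (hmono p q) ?_)
  calc M.viaLang A p r * ((M.viaLang A r r)∗ * M.viaLang A r q)
      ≤ M.viaLang (insert r A) p r *
          ((M.viaLang (insert r A) r r)∗ * M.viaLang (insert r A) r q) := by
        gcongr <;> apply hmono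
    _ ≤ M.viaLang (insert r A) p r * M.viaLang (insert r A) r q := by
        gcongr; exact kstar_mul_le_self (viaLang_mul_le hr)
    _ ≤ M.viaLang (insert r A) p q := viaLang_mul_le hr

end DFA

section Reverse
variable {σ : Type*} [Finite σ]

lemma DFA.isSemilinearSet_image_viaLang {S : Type*} [Finite S] (M : DFA σ S) (A : Set S)
    (p q : S) : IsSemilinearSet (parikhWord '' M.viaLang A p q) := by
  have hA := A.toFinite
  induction A, hA using Set.Finite.induction_on generalizing p q with
  | empty =>
    refine .of_finite (((List.finite_length_le σ 1).subset fun w hw => ?_).image _)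
    exact DFA.ReachesVia.length_le_one hw
  | @insert r A _ _ ih =>
    rw [DFA.viaLang_insert, image_parikhWord_add, image_parikhWord_mul, image_parikhWord_mul,
      image_parikhWord_kstar]
    exact (ih p q).union ((ih p r).add ((ih r r).closure.add (ih r q)))

lemma Language.IsRegular.isSemilinearSet_image_parikhWord {L : Language σ} (h : L.IsRegular) :
    IsSemilinearSet (parikhWord '' L) := by
  obtain ⟨S, _, M, rfl⟩ := h
  have hacc : parikhWord '' M.accepts = ⋃ q ∈ M.accept, parikhWord '' M.viaLang univ M.start q := by
    ext v
    simp [DFA.viaLang, DFA.reachesVia_univ]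
    rfl
  rw [hacc]
  exact .biUnion (toFinite _) fun q _ => M.isSemilinearSet_image_viaLang _ _ _

end Reverse

/-- a language L over a finite alphabet is semilinear iff there is a
regular language R letter-equivalent to L, i.e. with the same Parikh image. -/
theorem semilinear_iff_letterEquiv_regular {σ : Type*} [Fintype σ] (L : Language σ) :
    IsSemilinearLanguage L ↔
      ∃ R : Language σ, R.IsRegular ∧ parikhWord '' L = parikhWord '' R := by
  unfold IsSemilinearLanguage
  rw [isSemilinearSet'_iff]
  constructor
  · intro h
    obtain ⟨R, hR, hRL⟩ := exists_isRegular_image_parikhWord_eq h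
    exact ⟨R, hR, hRL.symm⟩
  · rintro ⟨R, hR, hRL⟩
    exact hRL ▸ hR.isSemilinearSet_image_parikhWord
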